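/- If rank(G) ≤ m and P is the rank-m oblique projector onto the full likelihood-informed subspace (r = m, using all generalized eigenvectors with nonzero eigenvalue), then G P = G, and consequently the optimal low-rank posterior mean and covariance approximations coincide exactly with the true posterior mean and covariance. -/
import Mathlib


open Matrix

/-- If `G` has full rank `m` and `P = V Wᵀ` is the oblique projector onto the
full likelihood-informed subspace (`r = m`, columns of `V` being generalized
eigenvectors with nonzero eigenvalues, `W = Γ⁻¹ V`, `Vᵀ W = I_m`), then
`G P = G`, and consequently the optimal low-rank posterior mean and covariance
approximations coincide exactly with the true posterior mean and covariance. -/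
theorem statement11 {m d : ℕ}
    (G : Matrix (Fin m) (Fin d) ℝ)
    (Γ : Matrix (Fin d) (Fin d) ℝ) (Γobs : Matrix (Fin m) (Fin m) ℝ)
    (hΓ : Γ.PosDef) (hΓobs : Γobs.PosDef)
    (hrank : G.rank = m)
    (V W : Matrix (Fin d) (Fin m) ℝ)
    (hW : W = Γ⁻¹ * V)
    (hVW : Vᵀ * W = 1)
    (δ : Fin m → ℝ) (hδ : ∀ i, δ i ≠ 0)
    (heig : ∀ i, (Gᵀ * Γobs⁻¹ * G) *ᵥ (fun k => V k i)
      = (δ i) ^ 2 • (Γ⁻¹ *ᵥ fun k => V k i)) :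
    G * (V * Wᵀ) = G ∧
    (∀ (y : Fin m → ℝ) (μ : Fin d → ℝ),
      μ + (Γ * (G * (V * Wᵀ))ᵀ
            * ((G * (V * Wᵀ)) * Γ * (G * (V * Wᵀ))ᵀ + Γobs)⁻¹)
          *ᵥ (y - (G * (V * Wᵀ)) *ᵥ μ)
        = μ + (Γ * Gᵀ * (G * Γ * Gᵀ + Γobs)⁻¹) *ᵥ (y - G *ᵥ μ)) ∧
    Γ - Γ * (G * (V * Wᵀ))ᵀ
        * ((G * (V * Wᵀ)) * Γ * (G * (V * Wᵀ))ᵀ + Γobs)⁻¹ * (G * (V * Wᵀ)) * Γ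
      = Γ - Γ * Gᵀ * (G * Γ * Gᵀ + Γobs)⁻¹ * G * Γ := by
  -- matrix form of the eigenvalue equations
  set A : Matrix (Fin d) (Fin d) ℝ := Gᵀ * Γobs⁻¹ * G with hA
  set D : Matrix (Fin m) (Fin m) ℝ := Matrix.diagonal (fun i => (δ i) ^ 2) with hD
  have hAV : A * V = Γ⁻¹ * V * D := by
    ext k i
    have h := congrFun (heig i) k
    simp only [Matrix.mulVec, dotProduct, Pi.smul_apply, smul_eq_mul] at h
    simp only [Matrix.mul_apply, hD, Matrix.mul_diagonal]
    rw [h, mul_comm]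
    simp [Matrix.diagonal_apply, mul_ite, Finset.sum_ite_eq]
  -- inverse of D
  set Dinv : Matrix (Fin m) (Fin m) ℝ :=
    Matrix.diagonal (fun i => ((δ i) ^ 2)⁻¹) with hDinv
  have hDD : D * Dinv = 1 := by
    rw [hD, hDinv, Matrix.diagonal_mul_diagonal]
    have : (fun i => (δ i) ^ 2 * ((δ i) ^ 2)⁻¹) = fun _ : Fin m => (1 : ℝ) :=
      funext fun i => mul_inv_cancel₀ (pow_ne_zero 2 (hδ i))
    rw [this, Matrix.diagonal_one]
  -- W = Gᵀ * B
  set B : Matrix (Fin m) (Fin m) ℝ := Γobs⁻¹ * G * V * Dinv with hB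
  have hWB : W = Gᵀ * B := by
    have : A * V * Dinv = Γ⁻¹ * V * (D * Dinv) := by
      rw [hAV]; rw [Matrix.mul_assoc (Γ⁻¹ * V)]
    rw [hDD, Matrix.mul_one] at this
    rw [hW, ← this, hA, hB]
    simp [Matrix.mul_assoc]
  -- right inverse gives left inverse
  have h1 : (Vᵀ * Gᵀ) * B = 1 := by
    rw [Matrix.mul_assoc, ← hWB, hVW]
  have h2 : B * (Vᵀ * Gᵀ) = 1 := mul_eq_one_comm.mp h1
  -- the projector identity
  have hGP : G * (V * Wᵀ) = G := by
    have h3 : W * (Vᵀ * Gᵀ) = Gᵀ := by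
      rw [hWB, Matrix.mul_assoc, h2, Matrix.mul_one]
    have h4 := congrArg Matrix.transpose h3
    simpa [Matrix.transpose_mul, Matrix.mul_assoc] using h4
  exact ⟨hGP, fun y μ => by rw [hGP], by rw [hGP]⟩
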